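/- arXiv:2601.16075 — 5 statements merged into one kernel-verified Lean document; each statement's English description precedes it below -/
import Mathlib

section
/- Let A be an n×n real symmetric matrix with all entries a_{i,j} satisfying 0 < c ≤ a_{i,j} ≤ b. If x is the Perron eigenvector of A with positive entries and Euclidean norm 1, and λ is the Perron eigenvalue, then every entry x_i satisfies c/(b·√n) ≤ x_i ≤ b/(c·√n). -/
/-!
Summing the eigenvalue equation `λ xⱼ = ∑ₖ aⱼₖ xₖ` against the entry bounds gives
`c S ≤ λ xⱼ ≤ b S` for every `j`, where `S = ∑ₖ xₖ`. Hence any two entries of `x` have ratio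
at most `b / c`. Comparing `1 = ∑ⱼ xⱼ²` with `n` copies of the smallest, respectively
largest, entry squared then bounds every entry by `c / (b √n)` from below and `b / (c √n)`
from above.
-/

open Finset

namespace Matrix

variable {ι R : Type*} [Fintype ι] [Semiring R] [PartialOrder R] [IsOrderedRing R]

theorem mul_sum_le_mulVec_apply {A : Matrix ι ι R} {x : ι → R} {c : R} {i : ι}
    (hA : ∀ j, c ≤ A i j) (hx : ∀ j, 0 ≤ x j) : c * ∑ j, x j ≤ (A *ᵥ x) i := by
  rw [mul_sum]
  exact sum_le_sum fun j _ => mul_le_mul_of_nonneg_right (hA j) (hx j)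

theorem mulVec_apply_le_mul_sum {A : Matrix ι ι R} {x : ι → R} {b : R} {i : ι}
    (hA : ∀ j, A i j ≤ b) (hx : ∀ j, 0 ≤ x j) : (A *ᵥ x) i ≤ b * ∑ j, x j := by
  rw [mul_sum]
  exact sum_le_sum fun j _ => mul_le_mul_of_nonneg_right (hA j) (hx j)

theorem mul_le_mul_of_mulVec_eq_smul {A : Matrix ι ι ℝ} {x : ι → ℝ} {c b lam : ℝ}
    (hA : ∀ i j, c ≤ A i j ∧ A i j ≤ b) (hc : 0 < c) (hx : ∀ i, 0 < x i)
    (heig : A *ᵥ x = lam • x) (j k : ι) : c * x j ≤ b * x k := by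
  have hx0 : ∀ i, 0 ≤ x i := fun i => (hx i).le
  have heig_apply : ∀ i, (A *ᵥ x) i = lam * x i := fun i => by simp [heig]
  have hupper : lam * x j ≤ b * ∑ i, x i :=
    heig_apply j ▸ mulVec_apply_le_mul_sum (fun i => (hA j i).2) hx0
  have hlower : c * ∑ i, x i ≤ lam * x k :=
    heig_apply k ▸ mul_sum_le_mulVec_apply (fun i => (hA k i).1) hx0
  have hsum : 0 < ∑ i, x i := sum_pos (fun i _ => hx i) ⟨k, mem_univ k⟩
  have hb : 0 ≤ b := hc.le.trans ((hA k k).1.trans (hA k k).2)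
  have hlam : 0 < lam := pos_of_mul_pos_left ((mul_pos hc hsum).trans_le hlower) (hx k).le
  refine le_of_mul_le_mul_left ?_ hlam
  calc lam * (c * x j) = c * (lam * x j) := by ring
    _ ≤ c * (b * ∑ i, x i) := mul_le_mul_of_nonneg_left hupper hc.le
    _ = b * (c * ∑ i, x i) := by ring
    _ ≤ b * (lam * x k) := mul_le_mul_of_nonneg_left hlower hb
    _ = lam * (b * x k) := by ring

end Matrix

section UnitVector

variable {ι : Type*} [Fintype ι] {x : ι → ℝ} {c b : ℝ}

theorem div_mul_sqrt_card_le_of_forall_mul_le (hx : ∑ j, x j ^ 2 = 1) (hc : 0 ≤ c) (hb : 0 < b)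
    (hx0 : ∀ j, 0 ≤ x j) (i : ι) (h : ∀ j, c * x j ≤ b * x i) :
    c / (b * √(Fintype.card ι)) ≤ x i := by
  have hcard : 0 < (Fintype.card ι : ℝ) := by exact_mod_cast Fintype.card_pos_iff.2 ⟨i⟩
  have hsq : c ^ 2 ≤ Fintype.card ι * (b * x i) ^ 2 :=
    calc c ^ 2 = ∑ j, (c * x j) ^ 2 := by simp only [mul_pow, ← mul_sum, hx, mul_one]
      _ ≤ ∑ _j : ι, (b * x i) ^ 2 :=
        sum_le_sum fun j _ => pow_le_pow_left₀ (mul_nonneg hc (hx0 j)) (h j) 2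
      _ = Fintype.card ι * (b * x i) ^ 2 := by simp
  rw [div_le_iff₀ (by positivity)]
  calc c ≤ √(Fintype.card ι * (b * x i) ^ 2) := Real.le_sqrt_of_sq_le hsq
    _ = x i * (b * √(Fintype.card ι)) := by
      rw [Real.sqrt_mul hcard.le, Real.sqrt_sq (mul_nonneg hb.le (hx0 i))]; ring

theorem le_div_mul_sqrt_card_of_forall_mul_le (hx : ∑ j, x j ^ 2 = 1) (hc : 0 < c) (hb : 0 ≤ b)
    (i : ι) (hxi : 0 ≤ x i) (h : ∀ j, c * x i ≤ b * x j) :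
    x i ≤ b / (c * √(Fintype.card ι)) := by
  have hcard : 0 < (Fintype.card ι : ℝ) := by exact_mod_cast Fintype.card_pos_iff.2 ⟨i⟩
  have hsq : Fintype.card ι * (c * x i) ^ 2 ≤ b ^ 2 :=
    calc Fintype.card ι * (c * x i) ^ 2 = ∑ _j : ι, (c * x i) ^ 2 := by simp
      _ ≤ ∑ j, (b * x j) ^ 2 :=
        sum_le_sum fun j _ => pow_le_pow_left₀ (mul_nonneg hc.le hxi) (h j) 2
      _ = b ^ 2 := by simp only [mul_pow, ← mul_sum, hx, mul_one]
  rw [le_div_iff₀ (by positivity)]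
  calc x i * (c * √(Fintype.card ι)) = √(Fintype.card ι * (c * x i) ^ 2) := by
        rw [Real.sqrt_mul hcard.le, Real.sqrt_sq (mul_nonneg hc.le hxi)]; ring
    _ ≤ b := (Real.sqrt_le_left hb).2 hsq

end UnitVector

theorem perron_eigenvector_entry_bounds_general (n : ℕ) (A : Matrix (Fin n) (Fin n) ℝ)
    (c b : ℝ) (hc : 0 < c)
    (hbound : ∀ i j, c ≤ A i j ∧ A i j ≤ b)
    (x : Fin n → ℝ) (lam : ℝ)
    (hxpos : ∀ i, 0 < x i) (hxnorm : ∑ i, x i ^ 2 = 1)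
    (heig : A.mulVec x = lam • x) :
    ∀ i, c / (b * Real.sqrt n) ≤ x i ∧ x i ≤ b / (c * Real.sqrt n) := by
  intro i
  have hb : 0 < b := hc.trans_le ((hbound i i).1.trans (hbound i i).2)
  have hratio := Matrix.mul_le_mul_of_mulVec_eq_smul hbound hc hxpos heig
  have hx0 : ∀ j, 0 ≤ x j := fun j => (hxpos j).le
  simpa using And.intro
    (div_mul_sqrt_card_le_of_forall_mul_le hxnorm hc.le hb hx0 i (hratio · i))
    (le_div_mul_sqrt_card_of_forall_mul_le hxnorm hc hb.le i (hx0 i) (hratio i))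

/-- Entrywise bounds on the normalized Perron eigenvector of a symmetric matrix
with entries in `[c, b]`. -/
theorem perron_eigenvector_entry_bounds (n : ℕ) (A : Matrix (Fin n) (Fin n) ℝ)
    (c b : ℝ) (hA : A.IsSymm) (hc : 0 < c) (hcb : c ≤ b)
    (hbound : ∀ i j, c ≤ A i j ∧ A i j ≤ b)
    (x : Fin n → ℝ) (lam : ℝ)
    (hxpos : ∀ i, 0 < x i) (hxnorm : ∑ i, x i ^ 2 = 1)
    (heig : A.mulVec x = lam • x)
    (hmem : lam ∈ spectrum ℝ A) (hmax : ∀ μ ∈ spectrum ℝ A, |μ| ≤ lam) :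
    ∀ i, c / (b * Real.sqrt n) ≤ x i ∧ x i ≤ b / (c * Real.sqrt n) :=
  perron_eigenvector_entry_bounds_general n A c b hc hbound x lam hxpos hxnorm heig
end

section
/- Let K be a compact spectrahedron defined by a symmetric pencil Q and suppose the map z ↦ Q(z) is injective on K. For x ∈ K, the set F_x = {z ∈ K : ker Q(x) ⊆ ker Q(z)} is a face of K, i.e., whenever z₁, z₂ ∈ K, s ∈ (0,1), and s·z₁ + (1−s)·z₂ ∈ F_x, then z₁, z₂ ∈ F_x. -/
open Matrix

/-- `F_x = {z ∈ K : ker Q(x) ⊆ ker Q(z)}` is a face of the spectrahedron `K`. -/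
theorem spectrahedron_kernel_set_is_face (m k : ℕ)
    (A0 : Matrix (Fin m) (Fin m) ℝ) (A : Fin k → Matrix (Fin m) (Fin m) ℝ)
    (hA0 : A0.IsSymm) (hA : ∀ i, (A i).IsSymm)
    (K : Set (Fin k → ℝ))
    (hK : K = {z | (A0 + ∑ i, z i • A i).PosSemidef})
    (hcomp : IsCompact K)
    (hinj : Set.InjOn (fun z => A0 + ∑ i, z i • A i) K)
    (x : Fin k → ℝ) (hx : x ∈ K)
    (F : Set (Fin k → ℝ))
    (hF : F = {z ∈ K | ∀ v : Fin m → ℝ,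
      (A0 + ∑ i, x i • A i).mulVec v = 0 → (A0 + ∑ i, z i • A i).mulVec v = 0}) :
    ∀ z₁ ∈ K, ∀ z₂ ∈ K, ∀ s : ℝ, 0 < s → s < 1 →
      s • z₁ + (1 - s) • z₂ ∈ F → z₁ ∈ F ∧ z₂ ∈ F := by
  subst hK hF
  intro z₁ hz₁ z₂ hz₂ s hs0 hs1 hmem
  obtain ⟨hwK, hker⟩ := hmem
  set Q1 := A0 + ∑ i, z₁ i • A i with hQ1
  set Q2 := A0 + ∑ i, z₂ i • A i with hQ2
  have hP1 : Q1.PosSemidef := hz₁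
  have hP2 : Q2.PosSemidef := hz₂
  have haff : A0 + ∑ i, (s • z₁ + (1 - s) • z₂) i • A i = s • Q1 + (1 - s) • Q2 := by
    have hsum : ∀ i : Fin k, (s • z₁ + (1 - s) • z₂) i • A i
        = s • (z₁ i • A i) + (1 - s) • (z₂ i • A i) := by
      intro i; simp [add_smul, smul_smul]
    rw [Finset.sum_congr rfl fun i _ => hsum i, Finset.sum_add_distrib,
      ← Finset.smul_sum, ← Finset.smul_sum, hQ1, hQ2]
    module
  have key : ∀ v : Fin m → ℝ, (A0 + ∑ i, x i • A i).mulVec v = 0 →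
      Q1.mulVec v = 0 ∧ Q2.mulVec v = 0 := by
    intro v hv
    have hcomb : (s • Q1 + (1 - s) • Q2).mulVec v = 0 := by
      rw [← haff]; exact hker v hv
    have hcomb' : s • Q1.mulVec v + (1 - s) • Q2.mulVec v = 0 := by
      simpa [Matrix.add_mulVec, Matrix.smul_mulVec] using hcomb
    have h1 : (0 : ℝ) ≤ v ⬝ᵥ Q1.mulVec v := by simpa using hP1.dotProduct_mulVec_nonneg v
    have h2 : (0 : ℝ) ≤ v ⬝ᵥ Q2.mulVec v := by simpa using hP2.dotProduct_mulVec_nonneg v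
    have hdot : s * (v ⬝ᵥ Q1.mulVec v) + (1 - s) * (v ⬝ᵥ Q2.mulVec v) = 0 := by
      have := congrArg (fun w => v ⬝ᵥ w) hcomb'
      simpa [dotProduct_add, dotProduct_smul, smul_eq_mul] using this
    have hd1 : v ⬝ᵥ Q1.mulVec v = 0 := by nlinarith
    have hd2 : v ⬝ᵥ Q2.mulVec v = 0 := by nlinarith
    exact ⟨(hP1.dotProduct_mulVec_zero_iff v).mp (by simpa using hd1),
      (hP2.dotProduct_mulVec_zero_iff v).mp (by simpa using hd2)⟩
  exact ⟨⟨hz₁, fun v hv => (key v hv).1⟩, ⟨hz₂, fun v hv => (key v hv).2⟩⟩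
end

section
/- Let x be an extreme point of a compact spectrahedron K = {z ∈ ℝᵏ : Q(z) ≥ 0} defined by a symmetric pencil Q, and let P be the orthogonal projection onto ker(Q(x)). Then {x} = K ∩ {z ∈ ℝᵏ : P Q(z) P = 0}. -/
open Matrix

private lemma matrix_eq_zero_of_mulVec {m : ℕ} (M : Matrix (Fin m) (Fin m) ℝ)
    (h : ∀ v, M *ᵥ v = 0) : M = 0 := by
  ext i j
  simpa [Matrix.mulVec_single] using congrFun (h (Pi.single j 1)) i

private lemma dot_conj {m : ℕ} (M P : Matrix (Fin m) (Fin m) ℝ) (hP : Pᵀ = P)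
    (v : Fin m → ℝ) : (P *ᵥ v) ⬝ᵥ (M *ᵥ (P *ᵥ v)) = v ⬝ᵥ ((P * M * P) *ᵥ v) := by
  rw [mulVec_mulVec]
  nth_rewrite 1 [show P *ᵥ v = v ᵥ* P by rw [← vecMul_transpose, hP]]
  rw [← dotProduct_mulVec, mulVec_mulVec, ← mul_assoc]

private lemma quad_reduce {m : ℕ} (M P : Matrix (Fin m) (Fin m) ℝ) (hP : Pᵀ = P)
    (hMP : M * P = 0) (hPM : P * M = 0) (w : Fin m → ℝ) :
    w ⬝ᵥ (M *ᵥ w) = (w - P *ᵥ w) ⬝ᵥ (M *ᵥ (w - P *ᵥ w)) := by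
  have h1 : M *ᵥ (P *ᵥ w) = 0 := by rw [mulVec_mulVec, hMP, zero_mulVec]
  have h2 : (P *ᵥ w) ⬝ᵥ (M *ᵥ w) = 0 := by
    rw [show P *ᵥ w = w ᵥ* P by rw [← vecMul_transpose, hP], ← dotProduct_mulVec,
      mulVec_mulVec, hPM, zero_mulVec, dotProduct_zero]
  rw [mulVec_sub, h1, sub_zero, sub_dotProduct, h2, sub_zero]

private lemma quad_abs_le {m : ℕ} (M : Matrix (Fin m) (Fin m) ℝ) (q : Fin m → ℝ) :
    |q ⬝ᵥ M *ᵥ q| ≤ (∑ i, ∑ j, |M i j|) * (‖q‖ * ‖q‖) := by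
  have hq : ∀ i, |q i| ≤ ‖q‖ := fun i => by
    simpa [Real.norm_eq_abs] using norm_le_pi_norm q i
  have expand : q ⬝ᵥ M *ᵥ q = ∑ i, ∑ j, q i * (M i j * q j) := by
    simp [dotProduct, Matrix.mulVec, Finset.mul_sum]
  rw [expand]
  calc |∑ i, ∑ j, q i * (M i j * q j)| ≤ ∑ i, ∑ j, |q i * (M i j * q j)| := by
        refine (Finset.abs_sum_le_sum_abs _ _).trans
          (Finset.sum_le_sum fun i _ => Finset.abs_sum_le_sum_abs _ _)
    _ ≤ ∑ i, ∑ j, |M i j| * (‖q‖ * ‖q‖) := by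
        refine Finset.sum_le_sum fun i _ => Finset.sum_le_sum fun j _ => ?_
        rw [abs_mul, abs_mul]
        have h3 : |q i| * |q j| ≤ ‖q‖ * ‖q‖ :=
          mul_le_mul (hq i) (hq j) (abs_nonneg _) (norm_nonneg _)
        calc |q i| * (|M i j| * |q j|) = |M i j| * (|q i| * |q j|) := by ring
          _ ≤ |M i j| * (‖q‖ * ‖q‖) := mul_le_mul_of_nonneg_left h3 (abs_nonneg _)
    _ = (∑ i, ∑ j, |M i j|) * (‖q‖ * ‖q‖) := by
        rw [Finset.sum_mul]
        exact Finset.sum_congr rfl fun i _ => by rw [Finset.sum_mul]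

private lemma pos_on_ker {m : ℕ} (Q P : Matrix (Fin m) (Fin m) ℝ)
    (hQ : Q.PosSemidef)
    (hker : ∀ v, Q *ᵥ v = 0 → P *ᵥ v = v) :
    ∃ c > 0, ∀ q : Fin m → ℝ, P *ᵥ q = 0 → c * (‖q‖ * ‖q‖) ≤ q ⬝ᵥ Q *ᵥ q := by
  have mem_norm : ∀ q : Fin m → ℝ, q ≠ 0 → P *ᵥ q = 0 →
      (P *ᵥ (‖q‖⁻¹ • q) = 0 ∧ ‖(‖q‖⁻¹ • q)‖ = 1) := by
    intro q hq hPq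
    have hn : ‖q‖ ≠ 0 := norm_ne_zero_iff.mpr hq
    refine ⟨by rw [mulVec_smul, hPq, smul_zero], ?_⟩
    rw [norm_smul, Real.norm_eq_abs, abs_inv, abs_norm, inv_mul_cancel₀ hn]
  set S : Set (Fin m → ℝ) := {q | P *ᵥ q = 0 ∧ ‖q‖ = 1} with hSdef
  by_cases hS : S.Nonempty
  · have h1 : IsClosed {q : Fin m → ℝ | P *ᵥ q = 0} :=
      isClosed_eq (continuous_const.matrix_mulVec continuous_id) continuous_const
    have h2 : IsClosed {q : Fin m → ℝ | ‖q‖ = 1} :=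
      isClosed_eq continuous_norm continuous_const
    have hScl : IsClosed S := h1.inter h2
    have hsub : S ⊆ Metric.closedBall (0 : Fin m → ℝ) 1 := fun q hq => by
      rw [Metric.mem_closedBall, dist_zero_right, hq.2]
    have hScomp : IsCompact S :=
      (isCompact_closedBall (0 : Fin m → ℝ) 1).of_isClosed_subset hScl hsub
    have hf : Continuous fun q : Fin m → ℝ => q ⬝ᵥ Q *ᵥ q :=
      continuous_id.dotProduct (continuous_const.matrix_mulVec continuous_id)
    obtain ⟨q0, hq0S, hq0min⟩ := hScomp.exists_isMinOn hS hf.continuousOn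
    set c := q0 ⬝ᵥ Q *ᵥ q0 with hcdef
    have hc0 : 0 ≤ c := by simpa using hQ.dotProduct_mulVec_nonneg q0
    have hcne : c ≠ 0 := by
      intro h
      have hz : Q *ᵥ q0 = 0 := (hQ.dotProduct_mulVec_zero_iff q0).mp (by simpa using h)
      have h2' := hker q0 hz
      rw [hq0S.1] at h2'
      have := hq0S.2
      rw [← h2'] at this
      simp at this
    refine ⟨c, lt_of_le_of_ne hc0 (Ne.symm hcne), ?_⟩
    intro q hPq
    by_cases hq0 : q = 0
    · subst hq0; simp
    · have hn : ‖q‖ ≠ 0 := norm_ne_zero_iff.mpr hq0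
      obtain ⟨hu1, hu2⟩ := mem_norm q hq0 hPq
      set u := ‖q‖⁻¹ • q with hu
      have humem : u ∈ S := ⟨hu1, hu2⟩
      have hmin : c ≤ u ⬝ᵥ Q *ᵥ u := hq0min humem
      have hquad : u ⬝ᵥ Q *ᵥ u = ‖q‖⁻¹ * (‖q‖⁻¹ * (q ⬝ᵥ Q *ᵥ q)) := by
        rw [hu, mulVec_smul, smul_dotProduct, dotProduct_smul, smul_eq_mul, smul_eq_mul]
      rw [hquad] at hmin
      have hnn : (0:ℝ) < ‖q‖ := lt_of_le_of_ne (norm_nonneg q) (Ne.symm hn)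
      have key : q ⬝ᵥ Q *ᵥ q = (‖q‖ * ‖q‖) * (‖q‖⁻¹ * (‖q‖⁻¹ * (q ⬝ᵥ Q *ᵥ q))) := by
        field_simp
      rw [key]
      nlinarith [hmin, mul_pos hnn hnn]
  · refine ⟨1, one_pos, fun q hPq => ?_⟩
    by_cases hq : q = 0
    · subst hq; simp
    · exact absurd ⟨_, mem_norm q hq hPq⟩ hS

/-- For an extreme point `x` of a compact spectrahedron and `P` the orthogonal
projection onto `ker Q(x)`, we have `{x} = K ∩ {z : P Q(z) P = 0}`. -/
theorem extreme_point_eq_kernel_compression_set (m k : ℕ)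
    (A0 : Matrix (Fin m) (Fin m) ℝ) (A : Fin k → Matrix (Fin m) (Fin m) ℝ)
    (hA0 : A0.IsSymm) (hA : ∀ i, (A i).IsSymm)
    (K : Set (Fin k → ℝ))
    (hK : K = {z | (A0 + ∑ i, z i • A i).PosSemidef})
    (hcomp : IsCompact K) (hne : K.Nonempty)
    (x : Fin k → ℝ) (hx : x ∈ Set.extremePoints ℝ K)
    (P : Matrix (Fin m) (Fin m) ℝ) (hPsymm : P.IsSymm) (hPidem : P * P = P)
    (hPker₁ : ∀ v : Fin m → ℝ, (A0 + ∑ i, x i • A i).mulVec v = 0 → P.mulVec v = v)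
    (hPker₂ : ∀ v : Fin m → ℝ, (A0 + ∑ i, x i • A i).mulVec (P.mulVec v) = 0) :
    {x} = K ∩ {z | P * (A0 + ∑ i, z i • A i) * P = 0} := by
  obtain ⟨hxK, hext⟩ := hx
  have hPt : Pᵀ = P := hPsymm
  -- symmetry of the pencil
  have hsymmQ : ∀ c : Fin k → ℝ, (A0 + ∑ i, c i • A i)ᵀ = A0 + ∑ i, c i • A i := by
    intro c
    rw [Matrix.transpose_add, Matrix.transpose_sum, hA0.eq]
    congr 1
    exact Finset.sum_congr rfl fun i _ => by rw [Matrix.transpose_smul, (hA i).eq]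
  have hQx : (A0 + ∑ i, x i • A i).PosSemidef := by
    have := hxK; rw [hK] at this; exact this
  set Qx := A0 + ∑ i, x i • A i with hQxdef
  -- Qx * P = 0
  have hQxP : Qx * P = 0 := matrix_eq_zero_of_mulVec _ fun v => by
    rw [← mulVec_mulVec]; exact hPker₂ v
  ext z
  simp only [Set.mem_singleton_iff, Set.mem_inter_iff, Set.mem_setOf_eq]
  constructor
  · rintro rfl
    refine ⟨hxK, ?_⟩
    rw [mul_assoc, hQxP, mul_zero]
  · rintro ⟨hzK, hPz⟩
    set Qz := A0 + ∑ i, z i • A i with hQzdef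
    have hQz : Qz.PosSemidef := by
      have := hzK; rw [hK] at this; exact this
    -- Qz * P = 0
    have hQzP : Qz * P = 0 := matrix_eq_zero_of_mulVec _ fun v => by
      rw [← mulVec_mulVec]
      refine (hQz.dotProduct_mulVec_zero_iff (P *ᵥ v)).mp ?_
      simp only [star_trivial]
      rw [dot_conj Qz P hPt v, hPz, zero_mulVec, dotProduct_zero]
    set D := Qz - Qx with hDdef
    have hDsymm : Dᵀ = D := by
      rw [hDdef, Matrix.transpose_sub, hsymmQ, hsymmQ]
    have hDP : D * P = 0 := by rw [hDdef, sub_mul, hQzP, hQxP, sub_self]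
    have hPD : P * D = 0 := by
      have := congrArg Matrix.transpose hDP
      rwa [Matrix.transpose_mul, hPt, hDsymm, Matrix.transpose_zero] at this
    have hPQx : P * Qx = 0 := by
      have := congrArg Matrix.transpose hQxP
      rwa [Matrix.transpose_mul, hPt, hsymmQ, Matrix.transpose_zero] at this
    -- the pencil is affine along the segment
    have key : ∀ t : ℝ, A0 + ∑ i, (x + t • (z - x)) i • A i = Qx + t • D := by
      intro t
      have hterm : ∀ i : Fin k, (x + t • (z - x)) i • A i
          = x i • A i + t • (z i • A i) - t • (x i • A i) := by
        intro i
        simp only [Pi.add_apply, Pi.smul_apply, Pi.sub_apply, smul_eq_mul]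
        module
      rw [Finset.sum_congr rfl fun i _ => hterm i, Finset.sum_sub_distrib,
        Finset.sum_add_distrib, ← Finset.smul_sum, ← Finset.smul_sum, hQxdef, hDdef,
        hQzdef]
      module
    -- positive lower bound for Qx on ker P
    obtain ⟨c, hc, hcineq⟩ := pos_on_ker Qx P hQx hPker₁
    set Cd : ℝ := (∑ i, ∑ j, |D i j|) + 1 with hCd
    have hCdpos : 0 < Cd := by
      have : (0:ℝ) ≤ ∑ i, ∑ j, |D i j| :=
        Finset.sum_nonneg fun i _ => Finset.sum_nonneg fun j _ => abs_nonneg _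
      linarith
    set t : ℝ := c / (2 * Cd) with ht
    have htpos : 0 < t := div_pos hc (by linarith)
    -- Qx + s • D is PSD for |s| ≤ t
    have main : ∀ s : ℝ, |s| ≤ t → (Qx + s • D).PosSemidef := by
      intro s hs
      refine Matrix.PosSemidef.of_dotProduct_mulVec_nonneg ?_ ?_
      · rw [Matrix.IsHermitian, Matrix.conjTranspose_eq_transpose_of_trivial,
          Matrix.transpose_add, Matrix.transpose_smul, hDsymm, hQxdef, hsymmQ]
      · intro w
        simp only [star_trivial]
        set q := w - P *ᵥ w with hqdef
        have hPq : P *ᵥ q = 0 := by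
          rw [hqdef, mulVec_sub, mulVec_mulVec, hPidem, sub_self]
        have hredQx : w ⬝ᵥ (Qx *ᵥ w) = q ⬝ᵥ (Qx *ᵥ q) :=
          quad_reduce Qx P hPt hQxP hPQx w
        have hredD : w ⬝ᵥ (D *ᵥ w) = q ⬝ᵥ (D *ᵥ q) :=
          quad_reduce D P hPt hDP hPD w
        have hcq := hcineq q hPq
        have hDq := quad_abs_le D q
        have hDq' : |q ⬝ᵥ D *ᵥ q| ≤ Cd * (‖q‖ * ‖q‖) := by
          refine hDq.trans ?_
          have : (0:ℝ) ≤ ‖q‖ * ‖q‖ := mul_nonneg (norm_nonneg q) (norm_nonneg q)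
          nlinarith
        have expand : w ⬝ᵥ ((Qx + s • D) *ᵥ w)
            = q ⬝ᵥ (Qx *ᵥ q) + s * (q ⬝ᵥ (D *ᵥ q)) := by
          rw [add_mulVec, dotProduct_add, smul_mulVec, dotProduct_smul,
            smul_eq_mul, hredQx, hredD]
        rw [expand]
        have habs := abs_le.mp hDq'
        have hst : |s| * Cd ≤ t * Cd :=
          mul_le_mul_of_nonneg_right hs (le_of_lt hCdpos)
        have htCd : t * Cd = c / 2 := by
          rw [ht]; field_simp
        have hsabs := abs_le.mp (le_refl |s|)
        have hnq : (0:ℝ) ≤ ‖q‖ * ‖q‖ := mul_nonneg (norm_nonneg q) (norm_nonneg q)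
        -- s * (q ⬝ᵥ D *ᵥ q) ≥ -|s| * |q ⬝ᵥ D *ᵥ q| ≥ -(c/2) * (‖q‖*‖q‖)
        have hbound : -(|s| * |q ⬝ᵥ D *ᵥ q|) ≤ s * (q ⬝ᵥ D *ᵥ q) := neg_abs_le _ |>.trans_eq' (by rw [abs_mul])
        nlinarith [abs_nonneg s, abs_nonneg (q ⬝ᵥ D *ᵥ q),
          mul_le_mul_of_nonneg_left hDq' (abs_nonneg s)]
    -- build the two points of K around x
    have hy₁ : x + t • (z - x) ∈ K := by
      rw [hK]; show (A0 + ∑ i, (x + t • (z - x)) i • A i).PosSemidef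
      rw [key t]; exact main t (by rw [abs_of_pos htpos])
    have hy₂ : x + (-t) • (z - x) ∈ K := by
      rw [hK]; show (A0 + ∑ i, (x + (-t) • (z - x)) i • A i).PosSemidef
      rw [key (-t)]; exact main (-t) (by rw [abs_neg, abs_of_pos htpos])
    have hseg : x ∈ openSegment ℝ (x + t • (z - x)) (x + (-t) • (z - x)) := by
      refine ⟨1/2, 1/2, by norm_num, by norm_num, by norm_num, ?_⟩
      module
    have := hext hy₁ hy₂ hseg
    have hz0 : t • (z - x) = 0 := by
      have h' := this
      rwa [add_eq_left] at h'
    have := smul_eq_zero.mp hz0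
    rcases this with h | h
    · exact absurd h (ne_of_gt htpos)
    · exact sub_eq_zero.mp h
end

section
/- Let M be a real symmetric n×n matrix with all entries strictly positive that has exactly one strictly positive eigenvalue (counted with multiplicity). Then the Hadamard (entrywise) inverse B, with B_{i,j} = 1/M_{i,j}, is positive semidefinite. -/
open Matrix Finset Real Set MeasureTheory

namespace ReamsAux

variable {n : ℕ}

def qf (C : Matrix (Fin n) (Fin n) ℝ) (x : Fin n → ℝ) : ℝ := ∑ i, ∑ j, x i * C i j * x j

lemma dot_eq_qf (C : Matrix (Fin n) (Fin n) ℝ) (x : Fin n → ℝ) :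
    dotProduct (star x) (C *ᵥ x) = qf C x := by
  simp [dotProduct, mulVec, qf, Finset.mul_sum, mul_assoc]

lemma posSemidef_of_qf (C : Matrix (Fin n) (Fin n) ℝ) (h1 : C.IsHermitian)
    (h2 : ∀ x, 0 ≤ qf C x) : C.PosSemidef := by
  refine Matrix.PosSemidef.of_dotProduct_mulVec_nonneg h1 fun x => ?_
  rw [dot_eq_qf]; exact h2 x

lemma entry_spectral {M : Matrix (Fin n) (Fin n) ℝ} (hM : M.IsHermitian) (i j : Fin n) :
    M i j = ∑ k, hM.eigenvalues k * hM.eigenvectorBasis k i * hM.eigenvectorBasis k j := by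
  conv_lhs => rw [hM.spectral_theorem]
  rw [Unitary.conjStarAlgAut_apply]
  rw [Matrix.mul_apply]
  simp only [Matrix.mul_apply, Matrix.diagonal_apply, Function.comp_apply, mul_ite, mul_zero,
    Finset.sum_ite_eq', Finset.mem_univ, if_true, Matrix.star_apply,
    Matrix.IsHermitian.eigenvectorUnitary_apply]
  refine Finset.sum_congr rfl fun k _ => ?_
  simp only [RCLike.star_def, RCLike.conj_to_real]
  rw [RCLike.ofReal_real_eq_id]
  show hM.eigenvectorBasis k i * hM.eigenvalues k * hM.eigenvectorBasis k j = _
  ring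

lemma row_orthon {M : Matrix (Fin n) (Fin n) ℝ} (hM : M.IsHermitian) (i j : Fin n) :
    (∑ k, hM.eigenvectorBasis k i * hM.eigenvectorBasis k j) = if i = j then 1 else 0 := by
  have h := (Matrix.mem_unitaryGroup_iff).mp (hM.eigenvectorUnitary).2
  have h2 : ((hM.eigenvectorUnitary : Matrix (Fin n) (Fin n) ℝ) *
      star (hM.eigenvectorUnitary : Matrix (Fin n) (Fin n) ℝ)) i j
      = (1 : Matrix (Fin n) (Fin n) ℝ) i j := by rw [h]
  simpa [Matrix.mul_apply, Matrix.one_apply, Matrix.star_apply,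
    Matrix.IsHermitian.eigenvectorUnitary_apply] using h2

lemma col_orthon {M : Matrix (Fin n) (Fin n) ℝ} (hM : M.IsHermitian) (k l : Fin n) :
    (∑ i, hM.eigenvectorBasis k i * hM.eigenvectorBasis l i) = if k = l then 1 else 0 := by
  have h := (Matrix.mem_unitaryGroup_iff').mp (hM.eigenvectorUnitary).2
  have h2 : (star (hM.eigenvectorUnitary : Matrix (Fin n) (Fin n) ℝ) *
      (hM.eigenvectorUnitary : Matrix (Fin n) (Fin n) ℝ)) k l
      = (1 : Matrix (Fin n) (Fin n) ℝ) k l := by rw [h]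
  simp only [Matrix.mul_apply, Matrix.one_apply, Matrix.star_apply,
    Matrix.IsHermitian.eigenvectorUnitary_apply] at h2
  simpa [mul_comm] using h2


lemma qf_spectral {M : Matrix (Fin n) (Fin n) ℝ} (hM : M.IsHermitian) (x : Fin n → ℝ) :
    qf M x = ∑ k, hM.eigenvalues k * (∑ i, hM.eigenvectorBasis k i * x i)^2 := by
  calc qf M x = ∑ i, ∑ j, ∑ k, hM.eigenvalues k *
        (hM.eigenvectorBasis k i * x i) * (hM.eigenvectorBasis k j * x j) := by
        refine Finset.sum_congr rfl fun i _ => Finset.sum_congr rfl fun j _ => ?_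
        rw [entry_spectral hM i j, Finset.mul_sum, Finset.sum_mul]
        exact Finset.sum_congr rfl fun k _ => by ring
    _ = ∑ i, ∑ k, ∑ j, hM.eigenvalues k *
        (hM.eigenvectorBasis k i * x i) * (hM.eigenvectorBasis k j * x j) :=
        Finset.sum_congr rfl fun i _ => Finset.sum_comm
    _ = ∑ k, ∑ i, ∑ j, hM.eigenvalues k *
        (hM.eigenvectorBasis k i * x i) * (hM.eigenvectorBasis k j * x j) :=
        Finset.sum_comm
    _ = ∑ k, hM.eigenvalues k * (∑ i, hM.eigenvectorBasis k i * x i)^2 := by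
        refine Finset.sum_congr rfl fun k _ => ?_
        rw [sq, Finset.sum_mul_sum, Finset.mul_sum]
        exact Finset.sum_congr rfl fun i _ => by
          rw [Finset.mul_sum]
          exact Finset.sum_congr rfl fun j _ => by ring

lemma parseval {M : Matrix (Fin n) (Fin n) ℝ} (hM : M.IsHermitian) (x : Fin n → ℝ) :
    (∑ k, (∑ i, hM.eigenvectorBasis k i * x i)^2) = ∑ i, (x i)^2 := by
  calc (∑ k, (∑ i, hM.eigenvectorBasis k i * x i)^2)
      = ∑ k, ∑ i, ∑ j, (x i * x j) * (hM.eigenvectorBasis k i * hM.eigenvectorBasis k j) := by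
        refine Finset.sum_congr rfl fun k _ => ?_
        rw [sq, Finset.sum_mul_sum]
        exact Finset.sum_congr rfl fun i _ => Finset.sum_congr rfl fun j _ => by ring
    _ = ∑ i, ∑ j, (x i * x j) * ∑ k, (hM.eigenvectorBasis k i * hM.eigenvectorBasis k j) := by
        rw [Finset.sum_comm]
        refine Finset.sum_congr rfl fun i _ => ?_
        rw [Finset.sum_comm]
        exact Finset.sum_congr rfl fun j _ => (Finset.mul_sum _ _ _).symm
    _ = ∑ i, (x i)^2 := by
        simp only [row_orthon hM, mul_ite, mul_one, mul_zero]
        refine Finset.sum_congr rfl fun i _ => ?_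
        rw [Finset.sum_ite_eq _ i (fun j => x i * x j)]
        simp [sq]

lemma expansion {M : Matrix (Fin n) (Fin n) ℝ} (hM : M.IsHermitian) (x : Fin n → ℝ) (j : Fin n) :
    x j = ∑ k, (∑ i, hM.eigenvectorBasis k i * x i) * hM.eigenvectorBasis k j := by
  calc x j = ∑ i, ∑ k, (x i) * (hM.eigenvectorBasis k i * hM.eigenvectorBasis k j) := by
        simp only [← Finset.mul_sum, row_orthon hM, mul_ite, mul_one, mul_zero,
          Finset.sum_ite_eq', Finset.mem_univ, if_true]
    _ = ∑ k, (∑ i, hM.eigenvectorBasis k i * x i) * hM.eigenvectorBasis k j := by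
        rw [Finset.sum_comm]
        refine Finset.sum_congr rfl fun k _ => ?_
        rw [Finset.sum_mul]
        exact Finset.sum_congr rfl fun i _ => by ring


lemma perron {M : Matrix (Fin n) (Fin n) ℝ} (hM : M.IsHermitian) (hpos : ∀ i j, 0 < M i j)
    (hone : Nat.card {i : Fin n // 0 < hM.eigenvalues i} = 1) :
    ∃ u : Fin n → ℝ, (∀ i, 0 < u i) ∧ (∀ x, (∑ i, u i * x i) = 0 → qf M x ≤ 0) := by
  classical
  rw [Nat.card_eq_fintype_card] at hone
  obtain ⟨⟨i0, hi0⟩, huniq⟩ := Fintype.card_eq_one_iff.mp hone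
  have hneg : ∀ k, k ≠ i0 → hM.eigenvalues k ≤ 0 := by
    intro k hk
    by_contra h
    push_neg at h
    exact hk (congrArg Subtype.val (huniq ⟨k, h⟩))
  set μ : Fin n → ℝ := hM.eigenvalues with hμ
  set w : Fin n → ℝ := fun i => hM.eigenvectorBasis i0 i with hw
  set u : Fin n → ℝ := fun i => |w i| with hu
  set c : Fin n → ℝ := fun k => ∑ i, hM.eigenvectorBasis k i * u i with hc
  have hcol : ∀ k, (∑ i, hM.eigenvectorBasis k i * w i) = if k = i0 then 1 else 0 :=
    fun k => col_orthon hM k i0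
  have hnorm : (∑ i, (w i)^2) = 1 := by
    have := col_orthon hM i0 i0
    simp only [if_true] at this
    rw [← this]
    exact Finset.sum_congr rfl fun i _ => pow_two _
  have hqfw : qf M w = μ i0 := by
    rw [qf_spectral hM w]
    simp only [hcol]
    rw [Finset.sum_eq_single i0]
    · simp [hμ]
    · intro k _ hk; simp [hk]
    · intro h; exact absurd (Finset.mem_univ i0) h
  have hle : qf M w ≤ qf M u := by
    refine Finset.sum_le_sum fun i _ => Finset.sum_le_sum fun j _ => ?_
    have h1 : w i * w j ≤ u i * u j := by
      rw [hu]; simp only [← abs_mul]; exact le_abs_self _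
    calc w i * M i j * w j = (w i * w j) * M i j := by ring
      _ ≤ (u i * u j) * M i j := mul_le_mul_of_nonneg_right h1 (hpos i j).le
      _ = u i * M i j * u j := by ring
  have hqfu : qf M u = ∑ k, μ k * (c k)^2 := qf_spectral hM u
  have hpars : (∑ k, (c k)^2) = 1 := by
    rw [hc]
    rw [parseval hM u]
    rw [← hnorm]
    exact Finset.sum_congr rfl fun i _ => by rw [hu]; exact sq_abs _
  have hbound : qf M u ≤ μ i0 * (c i0)^2 := by
    rw [hqfu, ← Finset.add_sum_erase _ _ (Finset.mem_univ i0)]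
    have : (∑ k ∈ Finset.univ.erase i0, μ k * (c k)^2) ≤ 0 := by
      refine Finset.sum_nonpos fun k hk => ?_
      exact mul_nonpos_of_nonpos_of_nonneg (hneg k (Finset.ne_of_mem_erase hk)) (sq_nonneg _)
    linarith
  have hc2le1 : (c i0)^2 ≤ 1 := by
    rw [← hpars]
    exact Finset.single_le_sum (fun k _ => sq_nonneg (c k)) (Finset.mem_univ i0)
  have hc2 : (c i0)^2 = 1 := by nlinarith [hi0]
  have hcz : ∀ k, k ≠ i0 → c k = 0 := by
    intro k hk
    have hzero : (∑ k ∈ Finset.univ.erase i0, (c k)^2) = 0 := by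
      have h5 := Finset.add_sum_erase _ (fun k => (c k)^2) (Finset.mem_univ i0)
      rw [hpars] at h5
      beta_reduce at h5
      linarith [hc2, h5]
    have := (Finset.sum_eq_zero_iff_of_nonneg (fun k _ => sq_nonneg (c k))).mp hzero k
      (Finset.mem_erase.mpr ⟨hk, Finset.mem_univ k⟩)
    exact (pow_eq_zero_iff two_ne_zero).mp this
  have hu_eq : ∀ j, u j = c i0 * hM.eigenvectorBasis i0 j := by
    intro j
    have hexp := expansion hM u j
    rw [hexp, Finset.sum_eq_single i0 (fun k _ hk => by
      have h9 : (∑ i, hM.eigenvectorBasis k i * u i) = 0 := hcz k hk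
      rw [h9]; ring) (fun h => absurd (Finset.mem_univ i0) h)]
  have hcne : c i0 ≠ 0 := by
    intro h; rw [h] at hc2; norm_num at hc2
  -- positivity of u
  have humulvec : ∀ i, (∑ j, M i j * u j) = μ i0 * u i := by
    intro i
    have hmvi : (∑ j, M i j * w j) = μ i0 * w i := congrFun (hM.mulVec_eigenvectorBasis i0) i
    have : (∑ j, M i j * u j) = c i0 * (∑ j, M i j * w j) := by
      rw [Finset.mul_sum]
      exact Finset.sum_congr rfl fun j _ => by rw [hu_eq j]; show M i j * _ = _; ring
    rw [this, hmvi, hu_eq i]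
    show c i0 * (μ i0 * w i) = μ i0 * (c i0 * hM.eigenvectorBasis i0 i)
    ring
  have hunonneg : ∀ i, 0 ≤ u i := fun i => abs_nonneg _
  have huex : ∃ j, 0 < u j := by
    by_contra h
    push_neg at h
    have : ∀ i, u i = 0 := fun i => le_antisymm (h i) (hunonneg i)
    have : (∑ i, (w i)^2) = 0 := by
      refine Finset.sum_eq_zero fun i _ => ?_
      have := this i
      rw [hu] at this
      simp only [abs_eq_zero] at this
      rw [this]; ring
    rw [hnorm] at this
    norm_num at this
  have hupos : ∀ i, 0 < u i := by
    intro i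
    obtain ⟨j0, hj0⟩ := huex
    have hsum : 0 < ∑ j, M i j * u j := by
      refine Finset.sum_pos' (fun j _ => mul_nonneg (hpos i j).le (hunonneg j)) ?_
      exact ⟨j0, Finset.mem_univ j0, mul_pos (hpos i j0) hj0⟩
    rw [humulvec i] at hsum
    by_contra h
    push_neg at h
    nlinarith [hsum, hi0, h]
  refine ⟨u, hupos, fun x hx => ?_⟩
  have hxc : (∑ i, hM.eigenvectorBasis i0 i * x i) = 0 := by
    have h1 : c i0 * (∑ i, hM.eigenvectorBasis i0 i * x i) = ∑ i, u i * x i := by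
      rw [Finset.mul_sum]
      exact Finset.sum_congr rfl fun i _ => by rw [hu_eq i]; ring
    rw [hx] at h1
    exact (mul_eq_zero.mp h1).resolve_left hcne
  rw [qf_spectral hM x, ← Finset.add_sum_erase _ _ (Finset.mem_univ i0), hxc]
  have : (∑ k ∈ Finset.univ.erase i0, μ k * (∑ i, hM.eigenvectorBasis k i * x i)^2) ≤ 0 :=
    Finset.sum_nonpos fun k hk =>
      mul_nonpos_of_nonpos_of_nonneg (hneg k (Finset.ne_of_mem_erase hk)) (sq_nonneg _)
  simpa using this

lemma schur_qf {P N : Matrix (Fin n) (Fin n) ℝ} (hP : P.PosSemidef)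
    (hN : ∀ x, 0 ≤ qf N x) (x : Fin n → ℝ) :
    0 ≤ qf (Matrix.of fun i j => P i j * N i j) x := by
  have key : qf (Matrix.of fun i j => P i j * N i j) x
      = ∑ k, hP.1.eigenvalues k * qf N (fun i => hP.1.eigenvectorBasis k i * x i) := by
    calc qf (Matrix.of fun i j => P i j * N i j) x
        = ∑ i, ∑ j, ∑ k, hP.1.eigenvalues k *
          ((hP.1.eigenvectorBasis k i * x i) * N i j * (hP.1.eigenvectorBasis k j * x j)) := by
          refine Finset.sum_congr rfl fun i _ => Finset.sum_congr rfl fun j _ => ?_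
          show x i * (P i j * N i j) * x j = _
          rw [entry_spectral hP.1 i j, Finset.sum_mul, Finset.mul_sum, Finset.sum_mul]
          exact Finset.sum_congr rfl fun k _ => by ring
      _ = ∑ i, ∑ k, ∑ j, hP.1.eigenvalues k *
          ((hP.1.eigenvectorBasis k i * x i) * N i j * (hP.1.eigenvectorBasis k j * x j)) :=
          Finset.sum_congr rfl fun i _ => Finset.sum_comm
      _ = ∑ k, ∑ i, ∑ j, hP.1.eigenvalues k *
          ((hP.1.eigenvectorBasis k i * x i) * N i j * (hP.1.eigenvectorBasis k j * x j)) :=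
          Finset.sum_comm
      _ = ∑ k, hP.1.eigenvalues k * qf N (fun i => hP.1.eigenvectorBasis k i * x i) := by
          refine Finset.sum_congr rfl fun k _ => ?_
          rw [qf, Finset.mul_sum]
          exact Finset.sum_congr rfl fun i _ => (Finset.mul_sum _ _ _).symm
  rw [key]
  exact Finset.sum_nonneg fun k _ =>
    mul_nonneg (hP.eigenvalues_nonneg k) (hN _)

lemma pow_qf {P : Matrix (Fin n) (Fin n) ℝ} (hP : P.PosSemidef) (m : ℕ) (x : Fin n → ℝ) :
    0 ≤ qf (Matrix.of fun i j => (P i j)^m) x := by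
  induction m generalizing x with
  | zero =>
      have : qf (Matrix.of fun i j => (P i j)^0) x = (∑ i, x i)^2 := by
        rw [sq, Finset.sum_mul_sum, qf]
        exact Finset.sum_congr rfl fun i _ => Finset.sum_congr rfl fun j _ => by
          show x i * (P i j ^ 0) * x j = x i * x j
          simp
      rw [this]; exact sq_nonneg _
  | succ m ih =>
      have : qf (Matrix.of fun i j => (P i j)^(m+1)) x
          = qf (Matrix.of fun i j => P i j * ((Matrix.of fun i j => (P i j)^m) i j)) x := by
        refine Finset.sum_congr rfl fun i _ => Finset.sum_congr rfl fun j _ => by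
          show x i * (P i j ^ (m+1)) * x j = _
          rw [pow_succ]
          show _ = x i * (P i j * P i j ^ m) * x j
          ring
      rw [this]
      exact schur_qf hP ih x

lemma exp_qf {P : Matrix (Fin n) (Fin n) ℝ} (hP : P.PosSemidef) (x : Fin n → ℝ) :
    0 ≤ qf (Matrix.of fun i j => Real.exp (P i j)) x := by
  have hterm : ∀ i j : Fin n, x i * Real.exp (P i j) * x j
      = ∑' m : ℕ, x i * ((P i j)^m / (Nat.factorial m : ℝ)) * x j := by
    intro i j
    rw [Real.exp_eq_exp_ℝ, NormedSpace.exp_eq_tsum_div]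
    rw [← tsum_mul_left, ← tsum_mul_right]
  have hsummable : ∀ p : Fin n × Fin n,
      Summable (fun m : ℕ => x p.1 * ((P p.1 p.2)^m / (Nat.factorial m : ℝ)) * x p.2) :=
    fun p => ((Real.summable_pow_div_factorial (P p.1 p.2)).mul_left (x p.1)).mul_right (x p.2)
  have key : qf (Matrix.of fun i j => Real.exp (P i j)) x
      = ∑' m : ℕ, ∑ p : Fin n × Fin n, x p.1 * ((P p.1 p.2)^m / (Nat.factorial m : ℝ)) * x p.2 := by
    rw [Summable.tsum_finsetSum (fun p _ => hsummable p)]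
    rw [qf, ← Finset.sum_product']
    exact Finset.sum_congr rfl fun p _ => hterm p.1 p.2
  rw [key]
  refine tsum_nonneg fun m => ?_
  have h2 : (∑ p : Fin n × Fin n, x p.1 * ((P p.1 p.2)^m / (Nat.factorial m : ℝ)) * x p.2)
      = (qf (Matrix.of fun i j => (P i j)^m) x) / (Nat.factorial m : ℝ) := by
    rw [qf, ← Finset.sum_product', Finset.sum_div]
    exact Finset.sum_congr rfl fun p _ => by
      show _ = (x p.1 * ((P p.1 p.2)^m) * x p.2) / _
      ring
  rw [h2]
  exact div_nonneg (pow_qf hP m x) (by positivity)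

lemma integral_exp_neg_mul (a : ℝ) (ha : 0 < a) :
    (∫ t in Ioi (0:ℝ), Real.exp (-(a * t))) = a⁻¹ := by
  have h := integral_exp_neg_mul_rpow one_pos ha
  have h2 : (∫ t in Ioi (0:ℝ), Real.exp (-(a * t)))
      = ∫ t in Ioi (0:ℝ), Real.exp (-a * t ^ (1:ℝ)) := by
    refine setIntegral_congr_fun measurableSet_Ioi fun t ht => ?_
    rw [Real.rpow_one]
    ring_nf
  rw [h2, h]
  norm_num [Real.Gamma_two, Real.rpow_neg_one]

lemma cnd_to_expqf {T : Matrix (Fin n) (Fin n) ℝ} (hTsym : ∀ i j, T j i = T i j)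
    (hcnd : ∀ y : Fin n → ℝ, (∑ i, y i) = 0 → qf T y ≤ 0) (k0 : Fin n)
    (t : ℝ) (ht : 0 ≤ t) (x : Fin n → ℝ) :
    0 ≤ qf (Matrix.of fun i j => Real.exp (-(t * T i j))) x := by
  classical
  set B' : Matrix (Fin n) (Fin n) ℝ :=
    Matrix.of fun i j => T i k0 + T k0 j - T i j - T k0 k0 with hB'
  -- B' is symmetric
  have hB'sym : B'.IsHermitian := by
    refine Matrix.IsHermitian.ext fun i j => ?_
    show star (B' j i) = B' i j
    rw [star_trivial]
    show T j k0 + T k0 i - T j i - T k0 k0 = T i k0 + T k0 j - T i j - T k0 k0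
    rw [hTsym k0 j, hTsym i k0, hTsym i j]
    ring
  -- B' has nonnegative quadratic form
  have hqfB' : ∀ z : Fin n → ℝ, 0 ≤ qf B' z := by
    intro z
    set s : ℝ := ∑ i, z i with hs
    set y : Fin n → ℝ := fun i => z i - s * (if i = k0 then 1 else 0) with hy
    have hysum : (∑ i, y i) = 0 := by
      rw [hy]
      rw [Finset.sum_sub_distrib]
      simp [← Finset.mul_sum, ← hs]
    have hT' := hcnd y hysum
    have expand : ∀ i j, y i * T i j * y j
        = z i * T i j * z j - (if i = k0 then s * (T k0 j * z j) else 0)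
          - (if j = k0 then s * (z i * T i k0) else 0)
          + (if i = k0 then (if j = k0 then s * s * T k0 k0 else 0) else 0) := by
      intro i j
      show (z i - s * (if i = k0 then 1 else 0)) * T i j * (z j - s * (if j = k0 then 1 else 0)) = _
      split_ifs with h1 h2 h2
      · subst h1; subst h2; ring
      · subst h1; ring
      · subst h2; ring
      · ring
    have hqfTy : qf T y = qf T z - s * (∑ j, T k0 j * z j) - s * (∑ i, z i * T i k0)
        + s * s * T k0 k0 := by
      rw [qf]
      simp only [expand]
      rw [Finset.sum_congr rfl (fun i (_ : i ∈ Finset.univ) => Finset.sum_add_distrib)]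
      rw [Finset.sum_congr rfl (fun i (_ : i ∈ Finset.univ) =>
        congrArg (· + _) (Finset.sum_sub_distrib _ _))]
      rw [Finset.sum_congr rfl (fun i (_ : i ∈ Finset.univ) =>
        congrArg (· + _) (congrArg (· - _) (Finset.sum_sub_distrib _ _)))]
      rw [Finset.sum_add_distrib, Finset.sum_sub_distrib, Finset.sum_sub_distrib]
      have c1 : (∑ i, ∑ j, if i = k0 then s * (T k0 j * z j) else 0)
          = s * (∑ j, T k0 j * z j) := by
        simp only [Finset.sum_ite_irrel, Finset.sum_const_zero, Finset.sum_ite_eq',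
          Finset.mem_univ, if_true, Finset.mul_sum]
      have c2 : (∑ i, ∑ j, if j = k0 then s * (z i * T i k0) else 0)
          = s * (∑ i, z i * T i k0) := by
        simp only [Finset.sum_ite_eq', Finset.mem_univ, if_true, Finset.mul_sum]
      have c3 : (∑ i, ∑ j, if i = k0 then (if j = k0 then s * s * T k0 k0 else 0) else 0)
          = s * s * T k0 k0 := by
        simp only [Finset.sum_ite_irrel, Finset.sum_const_zero, Finset.sum_ite_eq',
          Finset.mem_univ, if_true]
      rw [c1, c2, c3]
      rfl
    have hqfB'z : qf B' z = s * (∑ i, z i * T i k0) + s * (∑ j, T k0 j * z j)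
        - qf T z - s * s * T k0 k0 := by
      have expand2 : ∀ i j, z i * B' i j * z j
          = z i * T i k0 * z j + z i * (T k0 j * z j) - z i * T i j * z j
            - z i * z j * T k0 k0 := by
        intro i j
        show z i * (T i k0 + T k0 j - T i j - T k0 k0) * z j = _
        ring
      rw [qf]
      simp only [expand2]
      rw [Finset.sum_congr rfl (fun i (_ : i ∈ Finset.univ) => Finset.sum_sub_distrib _ _)]
      rw [Finset.sum_congr rfl (fun i (_ : i ∈ Finset.univ) =>
        congrArg (· - _) (Finset.sum_sub_distrib _ _))]
      rw [Finset.sum_congr rfl (fun i (_ : i ∈ Finset.univ) =>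
        congrArg (· - _) (congrArg (· - _) Finset.sum_add_distrib))]
      rw [Finset.sum_sub_distrib, Finset.sum_sub_distrib, Finset.sum_add_distrib]
      have d1 : (∑ i, ∑ j, z i * T i k0 * z j) = s * (∑ i, z i * T i k0) := by
        rw [hs, Finset.mul_sum]
        refine Finset.sum_congr rfl fun i _ => ?_
        rw [← Finset.mul_sum]
        exact mul_comm _ _
      have d2 : (∑ i, ∑ j, z i * (T k0 j * z j)) = s * (∑ j, T k0 j * z j) := by
        rw [hs, ← Finset.sum_mul_sum]
      have d4 : (∑ i, ∑ j, z i * z j * T k0 k0) = s * s * T k0 k0 := by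
        rw [hs]
        rw [show (∑ i, ∑ j, z i * z j * T k0 k0) = (∑ i, ∑ j, z i * z j) * T k0 k0 by
          rw [Finset.sum_mul]
          exact Finset.sum_congr rfl fun i _ => (Finset.sum_mul _ _ _).symm]
        rw [← Finset.sum_mul_sum, mul_assoc]
      rw [d1, d2, d4]
      rfl
    have : qf B' z = - qf T y := by rw [hqfB'z, hqfTy]; ring
    rw [this]
    linarith
  -- t • B' is PSD
  have hB'entry_sym : ∀ i j, B' j i = B' i j := fun i j => by
    have h1 := congrFun (congrFun hB'sym i) j
    simpa [Matrix.conjTranspose_apply] using h1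
  have herm : (t • B').IsHermitian := by
    refine Matrix.IsHermitian.ext fun i j => ?_
    show star ((t • B') j i) = (t • B') i j
    rw [star_trivial]
    show t * B' j i = t * B' i j
    rw [hB'entry_sym i j]
  have hqf_smul : ∀ z, 0 ≤ qf (t • B') z := by
    intro z
    have h3 : qf (t • B') z = t * qf B' z := by
      rw [qf, qf, Finset.mul_sum]
      refine Finset.sum_congr rfl fun i _ => ?_
      rw [Finset.mul_sum]
      refine Finset.sum_congr rfl fun j _ => ?_
      show z i * (t * B' i j) * z j = t * (z i * B' i j * z j)
      ring
    rw [h3]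
    exact mul_nonneg ht (hqfB' z)
  have hPSD : (t • B').PosSemidef := posSemidef_of_qf _ herm hqf_smul
  have final : qf (Matrix.of fun i j => Real.exp (-(t * T i j))) x
      = qf (Matrix.of fun i j => Real.exp ((t • B') i j))
          (fun i => x i * Real.exp (-(t * T i k0) + t * T k0 k0 / 2)) := by
    rw [qf, qf]
    refine Finset.sum_congr rfl fun i _ => Finset.sum_congr rfl fun j _ => ?_
    show x i * Real.exp (-(t * T i j)) * x j
        = (x i * Real.exp (-(t * T i k0) + t * T k0 k0 / 2)) *
          Real.exp (t * (T i k0 + T k0 j - T i j - T k0 k0)) *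
          (x j * Real.exp (-(t * T j k0) + t * T k0 k0 / 2))
    rw [hTsym j k0]
    rw [show Real.exp (-(t * T i j)) = Real.exp (-(t * T i k0) + t * T k0 k0 / 2) *
        Real.exp (t * (T i k0 + T j k0 - T i j - T k0 k0)) *
        Real.exp (-(t * T j k0) + t * T k0 k0 / 2) from by
      rw [← Real.exp_add, ← Real.exp_add]; congr 1; ring]
    ring
  rw [final]
  exact exp_qf hPSD _

lemma inv_qf {T : Matrix (Fin n) (Fin n) ℝ} (hTsym : ∀ i j, T j i = T i j)
    (hTpos : ∀ i j, 0 < T i j)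
    (hcnd : ∀ y : Fin n → ℝ, (∑ i, y i) = 0 → qf T y ≤ 0) (k0 : Fin n)
    (x : Fin n → ℝ) : 0 ≤ qf (Matrix.of fun i j => (T i j)⁻¹) x := by
  have hintg : ∀ p : Fin n × Fin n, IntegrableOn
      (fun t : ℝ => x p.1 * Real.exp (-(T p.1 p.2 * t)) * x p.2) (Ioi (0:ℝ)) := by
    intro p
    have h0 : IntegrableOn (fun t : ℝ => Real.exp (-T p.1 p.2 * t)) (Ioi (0:ℝ)) :=
      exp_neg_integrableOn_Ioi 0 (hTpos p.1 p.2)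
    have h1 : IntegrableOn (fun t : ℝ => Real.exp (-(T p.1 p.2 * t))) (Ioi (0:ℝ)) := by
      simpa [neg_mul] using h0
    exact (h1.const_mul (x p.1)).mul_const (x p.2)
  have hval : ∀ p : Fin n × Fin n, x p.1 * (T p.1 p.2)⁻¹ * x p.2
      = ∫ t in Ioi (0:ℝ), x p.1 * Real.exp (-(T p.1 p.2 * t)) * x p.2 := by
    intro p
    have h2 : (∫ t in Ioi (0:ℝ), x p.1 * Real.exp (-(T p.1 p.2 * t)) * x p.2)
        = (x p.1 * x p.2) * ∫ t in Ioi (0:ℝ), Real.exp (-(T p.1 p.2 * t)) := by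
      rw [← MeasureTheory.integral_const_mul]
      exact setIntegral_congr_fun measurableSet_Ioi fun t _ => by ring
    rw [h2, integral_exp_neg_mul _ (hTpos p.1 p.2)]
    ring
  have key : qf (Matrix.of fun i j => (T i j)⁻¹) x
      = ∫ t in Ioi (0:ℝ), ∑ p : Fin n × Fin n,
          x p.1 * Real.exp (-(T p.1 p.2 * t)) * x p.2 := by
    rw [MeasureTheory.integral_finset_sum _ (fun p _ => hintg p)]
    rw [qf, ← Finset.sum_product']
    exact Finset.sum_congr rfl fun p _ => hval p
  rw [key]
  refine setIntegral_nonneg measurableSet_Ioi fun t ht => ?_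
  have h4 : (∑ p : Fin n × Fin n, x p.1 * Real.exp (-(T p.1 p.2 * t)) * x p.2)
      = qf (Matrix.of fun i j => Real.exp (-(t * T i j))) x := by
    rw [qf, ← Finset.sum_product']
    refine Finset.sum_congr rfl fun p _ => by
      show _ = x p.1 * Real.exp (-(t * T p.1 p.2)) * x p.2
      rw [mul_comm (T p.1 p.2) t]
  rw [h4]
  exact cnd_to_expqf hTsym hcnd k0 t (le_of_lt ht) x

end ReamsAux

/-- Reams' theorem: if a real symmetric matrix with strictly positive entries has
exactly one strictly positive eigenvalue, then its Hadamard (entrywise) inverse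
is positive semidefinite. -/
theorem hadamard_inverse_posSemidef (n : ℕ) (M : Matrix (Fin n) (Fin n) ℝ)
    (hM : M.IsHermitian) (hpos : ∀ i j, 0 < M i j)
    (hone : Nat.card {i : Fin n // 0 < hM.eigenvalues i} = 1) :
    (Matrix.of fun i j => (M i j)⁻¹).PosSemidef := by
  classical
  obtain ⟨u, hupos, hcnd⟩ := ReamsAux.perron hM hpos hone
  have hne : Nonempty {i : Fin n // 0 < hM.eigenvalues i} :=
    (Nat.card_pos_iff.mp (by rw [hone]; norm_num)).1
  obtain ⟨⟨k0, _⟩⟩ := hne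
  have hMsym : ∀ i j, M j i = M i j := fun i j => by
    simpa using congrFun (congrFun hM i) j
  set T : Matrix (Fin n) (Fin n) ℝ := Matrix.of fun i j => M i j / (u i * u j) with hT
  have hTpos : ∀ i j, 0 < T i j := fun i j =>
    div_pos (hpos i j) (mul_pos (hupos i) (hupos j))
  have hTsym : ∀ i j, T j i = T i j := by
    intro i j
    show M j i / (u j * u i) = M i j / (u i * u j)
    rw [hMsym i j, mul_comm (u j) (u i)]
  have hTcnd : ∀ y : Fin n → ℝ, (∑ i, y i) = 0 → ReamsAux.qf T y ≤ 0 := by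
    intro y hy
    have h1 : (∑ i, u i * (y i / u i)) = 0 := by
      rw [← hy]
      exact Finset.sum_congr rfl fun i _ => by
        have hui := (hupos i).ne'
        field_simp
    have h2 := hcnd (fun i => y i / u i) h1
    have h3 : ReamsAux.qf T y = ReamsAux.qf M (fun i => y i / u i) := by
      rw [ReamsAux.qf, ReamsAux.qf]
      refine Finset.sum_congr rfl fun i _ => Finset.sum_congr rfl fun j _ => ?_
      show y i * (M i j / (u i * u j)) * y j = (y i / u i) * M i j * (y j / u j)
      have hui := (hupos i).ne'
      have huj := (hupos j).ne'
      field_simp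
      try ring
    rw [h3]
    exact h2
  refine ReamsAux.posSemidef_of_qf _ ?_ ?_
  · refine Matrix.IsHermitian.ext fun i j => ?_
    show star ((M j i)⁻¹) = (M i j)⁻¹
    rw [star_trivial, hMsym i j]
  · intro x
    have h5 : ReamsAux.qf (Matrix.of fun i j => (M i j)⁻¹) x
        = ReamsAux.qf (Matrix.of fun i j => (T i j)⁻¹) (fun i => x i / u i) := by
      rw [ReamsAux.qf, ReamsAux.qf]
      refine Finset.sum_congr rfl fun i _ => Finset.sum_congr rfl fun j _ => ?_
      show x i * (M i j)⁻¹ * x j = (x i / u i) * (M i j / (u i * u j))⁻¹ * (x j / u j)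
      have hui := (hupos i).ne'
      have huj := (hupos j).ne'
      have hm := (hpos i j).ne'
      rw [inv_div]
      field_simp
      try ring
    rw [h5]
    exact ReamsAux.inv_qf hTsym hTpos hTcnd k0 _
end

section
/- Let X be a compact metrizable space, π : C(X) → B(H) a unital *-homomorphism, and φ : C(X) → B(H) a unital completely positive map; extend both to Borel characteristic functions via their operator-valued measures. If for every pair of distinct points x, y ∈ X there exist disjoint open neighborhoods U of x and V of y with π(χ_U) φ(χ_V) π(χ_U) = 0, then φ = π on C(X). -/
open MeasureTheory
open scoped ComplexOrder

namespace UcpAux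

variable {H : Type*} [NormedAddCommGroup H] [InnerProductSpace ℂ H] [CompleteSpace H]

local notation "⟪" x ", " y "⟫" => @inner ℂ _ _ x y

lemma sa_of_realDiag {T : H →L[ℂ] H} {q : H → ℝ} (hq : ∀ x, ⟪x, T x⟫ = (q x : ℂ)) :
    ContinuousLinearMap.adjoint T = T := by
  have h0 : ∀ x : H, ⟪(T - ContinuousLinearMap.adjoint T) x, x⟫ = 0 := by
    intro x
    have h1 : ⟪T x, x⟫ = (q x : ℂ) := by
      rw [← inner_conj_symm, hq x, Complex.conj_ofReal]
    have h2 : ⟪(ContinuousLinearMap.adjoint T) x, x⟫ = (q x : ℂ) := by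
      rw [ContinuousLinearMap.adjoint_inner_left, hq x]
    simp [ContinuousLinearMap.sub_apply, inner_sub_left, h1, h2]
  have hz : ((T - ContinuousLinearMap.adjoint T : H →L[ℂ] H) : H →ₗ[ℂ] H) = 0 := by
    rw [← inner_map_self_eq_zero]
    intro x; exact h0 x
  have : (T - ContinuousLinearMap.adjoint T : H →L[ℂ] H) = 0 := by
    ext x
    have := congrFun (congrArg (fun (f : H →ₗ[ℂ] H) => f.toFun) hz) x
    simpa using this
  have := sub_eq_zero.mp this
  exact this.symm

lemma cs {T : H →L[ℂ] H} {q : H → ℝ} (hq : ∀ x, ⟪x, T x⟫ = (q x : ℂ))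
    (hq0 : ∀ x, 0 ≤ q x) (x y : H) : ‖⟪x, T y⟫‖ ^ 2 ≤ q x * q y := by
  have hsa := sa_of_realDiag hq
  by_cases hp : ⟪x, T y⟫ = 0
  · rw [hp]
    simpa using mul_nonneg (hq0 x) (hq0 y)
  set p : ℂ := ⟪x, T y⟫ with hpdef
  have hpn : (‖p‖ : ℝ) ≠ 0 := norm_ne_zero_iff.mpr hp
  set c : ℂ := (‖p‖ : ℂ) / p with hcdef
  have hcp : c * p = (‖p‖ : ℂ) := div_mul_cancel₀ _ hp
  have hcnorm : ‖c‖ = 1 := by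
    rw [hcdef, norm_div, Complex.norm_real, norm_norm, div_self hpn]
  -- symmetric entries
  have hyx : ⟪y, T x⟫ = (starRingEnd ℂ) p := by
    have hTx : ⟪T x, y⟫ = p := by
      rw [hpdef]
      conv_lhs => rw [← hsa]
      rw [ContinuousLinearMap.adjoint_inner_left]
    rw [← inner_conj_symm y (T x), hTx]
  have hcc : (starRingEnd ℂ) c * c = 1 := by
    have h2 : Complex.normSq c = 1 := by
      rw [Complex.normSq_eq_norm_sq, hcnorm]; norm_num
    rw [mul_comm, Complex.mul_conj, h2]; norm_num
  have key : ∀ t : ℝ, 0 ≤ q y * (t * t) + (2 * ‖p‖) * t + q x := by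
    intro t
    set a : H := ((t : ℂ) * c) • y with hadef
    have e1 : ⟪x, T a⟫ = ((t * ‖p‖ : ℝ) : ℂ) := by
      rw [hadef, ContinuousLinearMap.map_smul, inner_smul_right, ← hpdef, mul_assoc, hcp]
      push_cast; ring
    have e2 : ⟪a, T x⟫ = ((t * ‖p‖ : ℝ) : ℂ) := by
      rw [hadef, inner_smul_left, hyx, ← map_mul]
      have h5 : ((t : ℂ) * c) * p = ((t * ‖p‖ : ℝ) : ℂ) := by
        rw [mul_assoc, hcp]; push_cast; ring
      rw [h5, Complex.conj_ofReal]
    have e3 : ⟪a, T a⟫ = ((t * t * q y : ℝ) : ℂ) := by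
      rw [hadef, ContinuousLinearMap.map_smul, inner_smul_left, inner_smul_right, hq y]
      have h6 : (starRingEnd ℂ) ((t : ℂ) * c) * ((t : ℂ) * c * ((q y : ℝ) : ℂ))
          = ((t : ℂ) * (t : ℂ)) * ((starRingEnd ℂ) c * c) * ((q y : ℝ) : ℂ) := by
        rw [map_mul, Complex.conj_ofReal]; ring
      rw [h6, hcc]
      push_cast; ring
    have etot : ⟪x + a, T (x + a)⟫ = ((q x + 2 * ‖p‖ * t + q y * (t * t) : ℝ) : ℂ) := by
      rw [map_add, inner_add_left, inner_add_right, inner_add_right, e1, e2, e3, hq x]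
      push_cast; ring
    have : (q (x + a) : ℂ) = ((q x + 2 * ‖p‖ * t + q y * (t * t) : ℝ) : ℂ) := by
      rw [← hq (x + a), etot]
    have hre : q (x + a) = q x + 2 * ‖p‖ * t + q y * (t * t) := by
      exact_mod_cast this
    have := hq0 (x + a)
    linarith [hre ▸ this]
  have hd := discrim_le_zero key
  rw [discrim] at hd
  have : (2 * ‖p‖) ^ 2 - 4 * q y * q x ≤ 0 := hd
  nlinarith [norm_nonneg p]

lemma zero_of_diag {T : H →L[ℂ] H} {q : H → ℝ} (hq : ∀ x, ⟪x, T x⟫ = (q x : ℂ))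
    (hq0 : ∀ x, 0 ≤ q x) {ζ : H} (hζ : q ζ = 0) : T ζ = 0 := by
  have h := cs hq hq0 (T ζ) ζ
  rw [hζ, mul_zero] at h
  have : ‖⟪T ζ, T ζ⟫‖ = 0 := by
    have := norm_nonneg (⟪T ζ, T ζ⟫)
    nlinarith
  have : ⟪T ζ, T ζ⟫ = 0 := norm_eq_zero.mp this
  exact inner_self_eq_zero.mp this

lemma sq_le_diag {T : H →L[ℂ] H} {q : H → ℝ} (hq : ∀ x, ⟪x, T x⟫ = (q x : ℂ))
    (hq0 : ∀ x, 0 ≤ q x) (hqb : ∀ x, q x ≤ ‖x‖ ^ 2) (ζ : H) : ‖T ζ‖ ^ 2 ≤ q ζ := by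
  have h := cs hq hq0 (T ζ) ζ
  have hTT : ⟪T ζ, T ζ⟫ = ((‖T ζ‖ ^ 2 : ℝ) : ℂ) := by
    rw [inner_self_eq_norm_sq_to_K]; norm_cast
  rw [hTT] at h
  have h2 : (‖T ζ‖ ^ 2) ^ 2 ≤ q (T ζ) * q ζ := by
    calc (‖T ζ‖ ^ 2) ^ 2 = ‖((‖T ζ‖ ^ 2 : ℝ) : ℂ)‖ ^ 2 := by
          rw [Complex.norm_real, Real.norm_eq_abs, abs_of_nonneg (by positivity : (0:ℝ) ≤ ‖T ζ‖ ^ 2)]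
      _ ≤ q (T ζ) * q ζ := h
  have h3 : q (T ζ) ≤ ‖T ζ‖ ^ 2 := hqb _
  by_cases h0 : ‖T ζ‖ = 0
  · rw [h0]; simpa using hq0 ζ
  · have hpos : 0 < ‖T ζ‖ ^ 2 := by positivity
    nlinarith [hq0 ζ, hq0 (T ζ)]

lemma orth_sum {A C : H →L[ℂ] H} {qa qc : H → ℝ}
    (ha : ∀ x, ⟪x, A x⟫ = (qa x : ℂ)) (ha0 : ∀ x, 0 ≤ qa x) (hab : ∀ x, qa x ≤ ‖x‖ ^ 2)
    (hc : ∀ x, ⟪x, C x⟫ = (qc x : ℂ)) (hc0 : ∀ x, 0 ≤ qc x) (hcb : ∀ x, qc x ≤ ‖x‖ ^ 2)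
    (hAC : ∀ ζ, A (C ζ) = 0) (ζ : H) : qa ζ + qc ζ ≤ ‖ζ‖ ^ 2 := by
  have hsaA := sa_of_realDiag ha
  set s : ℝ := qa ζ + qc ζ with hsdef
  have hs0 : 0 ≤ s := add_nonneg (ha0 ζ) (hc0 ζ)
  have horth : ⟪A ζ, C ζ⟫ = 0 := by
    rw [← ContinuousLinearMap.adjoint_inner_right]
    rw [hsaA, hAC]
    simp
  have hnorm : ‖A ζ + C ζ‖ ^ 2 ≤ s := by
    have h1 := sq_le_diag ha ha0 hab ζ
    have h2 := sq_le_diag hc hc0 hcb ζ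
    have := norm_add_sq (𝕜 := ℂ) (A ζ) (C ζ)
    rw [horth] at this
    simp at this
    rw [this]
    nlinarith
  have hinner : ⟪ζ, A ζ + C ζ⟫ = (s : ℂ) := by
    rw [inner_add_right, ha, hc]; norm_cast
  have hcs : s ≤ ‖ζ‖ * ‖A ζ + C ζ‖ := by
    have := norm_inner_le_norm (𝕜 := ℂ) ζ (A ζ + C ζ)
    rw [hinner] at this
    rw [Complex.norm_real, Real.norm_eq_abs, abs_of_nonneg hs0] at this
    exact this
  by_cases hsz : s = 0
  · rw [hsz]; positivity
  · have : s ^ 2 ≤ ‖ζ‖ ^ 2 * s := by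
      calc s ^ 2 ≤ (‖ζ‖ * ‖A ζ + C ζ‖) ^ 2 := by nlinarith
        _ = ‖ζ‖ ^ 2 * ‖A ζ + C ζ‖ ^ 2 := by ring
        _ ≤ ‖ζ‖ ^ 2 * s := by nlinarith [sq_nonneg ‖ζ‖]
    have hspos : 0 < s := lt_of_le_of_ne hs0 (Ne.symm hsz)
    nlinarith

lemma flip_comp {A B : H →L[ℂ] H}
    (hA : ContinuousLinearMap.adjoint A = A) (hB : ContinuousLinearMap.adjoint B = B)
    (h : ∀ ξ, B (A ξ) = 0) : ∀ ξ, A (B ξ) = 0 := by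
  have hBA : B ∘L A = 0 := by ext ξ; simpa using h ξ
  have : ContinuousLinearMap.adjoint (B ∘L A) = 0 := by rw [hBA]; simp
  rw [ContinuousLinearMap.adjoint_comp, hA, hB] at this
  intro ξ
  have := congrFun (congrArg DFunLike.coe this) ξ
  simpa using this

end UcpAux


/-- Theorem (final step): if `π : C(X) → B(H)` is a unital *-homomorphism and
`φ : C(X) → B(H)` a unital completely positive map on a compact metrizable space
`X`, extended to Borel characteristic functions via their operator-valued
measures `Pπ`, `Pφ` (determined through the scalar measures `μπ ξ`, `μφ ξ`
representing the diagonal matrix coefficients), and if every pair of distinct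
points `x ≠ y` admits disjoint open neighborhoods `U ∋ x`, `V ∋ y` with
`π(χ_U) φ(χ_V) π(χ_U) = 0`, then `φ = π` on `C(X)`. -/
theorem ucp_eq_hom_of_separating_neighborhoods
    {X : Type*} [TopologicalSpace X] [CompactSpace X]
    [TopologicalSpace.MetrizableSpace X] [MeasurableSpace X] [BorelSpace X]
    {H : Type*} [NormedAddCommGroup H] [InnerProductSpace ℂ H] [CompleteSpace H]
    (π : C(X, ℂ) →⋆ₐ[ℂ] (H →L[ℂ] H))
    (φ : C(X, ℂ) →ₗ[ℂ] (H →L[ℂ] H)) (hφ1 : φ 1 = 1)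
    -- `φ` is completely positive:
    (hφcp : ∀ (n : ℕ) (f : Fin n → Fin n → C(X, ℂ)),
      (∀ t : X, (Matrix.of fun i j => f i j t).PosSemidef) →
      ∀ ξ : Fin n → H,
        0 ≤ (∑ i, ∑ j, (inner ℂ (ξ i) (φ (f i j) (ξ j)) : ℂ)).re ∧
        (∑ i, ∑ j, (inner ℂ (ξ i) (φ (f i j) (ξ j)) : ℂ)).im = 0)
    -- the scalar measures representing the diagonal matrix coefficients of `π`, `φ`:
    (μπ μφ : H → Measure X)
    (hμπfin : ∀ ξ, IsFiniteMeasure (μπ ξ)) (hμφfin : ∀ ξ, IsFiniteMeasure (μφ ξ))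
    (hμπ : ∀ (ξ : H) (f : C(X, ℂ)), (inner ℂ ξ (π f ξ) : ℂ) = ∫ t, f t ∂(μπ ξ))
    (hμφ : ∀ (ξ : H) (f : C(X, ℂ)), (inner ℂ ξ (φ f ξ) : ℂ) = ∫ t, f t ∂(μφ ξ))
    -- the operator-valued measures extending `π`, `φ` to characteristic functions:
    (Pπ Pφ : Set X → (H →L[ℂ] H))
    (hPπ : ∀ (ξ : H) (S : Set X), MeasurableSet S →
      (inner ℂ ξ (Pπ S ξ) : ℂ) = ((μπ ξ S).toReal : ℂ))
    (hPφ : ∀ (ξ : H) (S : Set X), MeasurableSet S →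
      (inner ℂ ξ (Pφ S ξ) : ℂ) = ((μφ ξ S).toReal : ℂ))
    -- the separation hypothesis `π(χ_U) φ(χ_V) π(χ_U) = 0`:
    (hsep : ∀ x y : X, x ≠ y → ∃ U V : Set X,
      IsOpen U ∧ IsOpen V ∧ x ∈ U ∧ y ∈ V ∧ Disjoint U V ∧
      Pπ U ∘L Pφ V ∘L Pπ U = 0) :
    ∀ f : C(X, ℂ), φ f = π f := by
    classical
  -- total masses
  have hmπ : ∀ ξ : H, (μπ ξ Set.univ).toReal = ‖ξ‖ ^ 2 := by
    intro ξ
    have h := hμπ ξ 1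
    rw [map_one] at h
    have h1 : (inner ℂ ξ ((1 : H →L[ℂ] H) ξ) : ℂ) = ((‖ξ‖ ^ 2 : ℝ) : ℂ) := by
      simp only [ContinuousLinearMap.one_apply]
      rw [inner_self_eq_norm_sq_to_K]
      norm_cast
    have h2 : ∫ t, (1 : C(X, ℂ)) t ∂(μπ ξ) = ((μπ ξ Set.univ).toReal : ℂ) := by
      simp [ContinuousMap.one_apply, Measure.real]
    rw [h1, h2] at h
    exact_mod_cast h.symm
  have hmφ : ∀ ξ : H, (μφ ξ Set.univ).toReal = ‖ξ‖ ^ 2 := by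
    intro ξ
    have h := hμφ ξ 1
    rw [hφ1] at h
    have h1 : (inner ℂ ξ ((1 : H →L[ℂ] H) ξ) : ℂ) = ((‖ξ‖ ^ 2 : ℝ) : ℂ) := by
      simp only [ContinuousLinearMap.one_apply]
      rw [inner_self_eq_norm_sq_to_K]
      norm_cast
    have h2 : ∫ t, (1 : C(X, ℂ)) t ∂(μφ ξ) = ((μφ ξ Set.univ).toReal : ℂ) := by
      simp [ContinuousMap.one_apply, Measure.real]
    rw [h1, h2] at h
    exact_mod_cast h.symm
  -- diagonal data
  have qπ : ∀ S : Set X, MeasurableSet S →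
      ∀ η : H, (inner ℂ η (Pπ S η) : ℂ) = (((fun ζ : H => (μπ ζ S).toReal) η : ℝ) : ℂ) :=
    fun S hS η => hPπ η S hS
  have qφ : ∀ S : Set X, MeasurableSet S →
      ∀ η : H, (inner ℂ η (Pφ S η) : ℂ) = (((fun ζ : H => (μφ ζ S).toReal) η : ℝ) : ℂ) :=
    fun S hS η => hPφ η S hS
  have q0 : ∀ (ν : H → Measure X) (S : Set X) (η : H), 0 ≤ (fun ζ : H => (ν ζ S).toReal) η :=
    fun _ _ _ => ENNReal.toReal_nonneg
  have bπ : ∀ (S : Set X) (η : H), (μπ η S).toReal ≤ ‖η‖ ^ 2 := by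
    intro S η
    haveI := hμπfin η
    calc (μπ η S).toReal ≤ (μπ η Set.univ).toReal :=
          ENNReal.toReal_mono (measure_ne_top _ _) (measure_mono (Set.subset_univ S))
      _ = ‖η‖ ^ 2 := hmπ η
  have bφ : ∀ (S : Set X) (η : H), (μφ η S).toReal ≤ ‖η‖ ^ 2 := by
    intro S η
    haveI := hμφfin η
    calc (μφ η S).toReal ≤ (μφ η Set.univ).toReal :=
          ENNReal.toReal_mono (measure_ne_top _ _) (measure_mono (Set.subset_univ S))
      _ = ‖η‖ ^ 2 := hmφ η
  have saπ : ∀ S : Set X, MeasurableSet S → ContinuousLinearMap.adjoint (Pπ S) = Pπ S :=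
    fun S hS => UcpAux.sa_of_realDiag (qπ S hS)
  have saφ : ∀ S : Set X, MeasurableSet S → ContinuousLinearMap.adjoint (Pφ S) = Pφ S :=
    fun S hS => UcpAux.sa_of_realDiag (qφ S hS)
  have zπ : ∀ S : Set X, MeasurableSet S → ∀ η : H, μπ η S = 0 → Pπ S η = 0 := by
    intro S hS η h
    exact UcpAux.zero_of_diag (qπ S hS) (q0 μπ S) (by simp [h])
  have zφ : ∀ S : Set X, MeasurableSet S → ∀ η : H, μφ η S = 0 → Pφ S η = 0 := by
    intro S hS η h
    exact UcpAux.zero_of_diag (qφ S hS) (q0 μφ S) (by simp [h])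
  have zφ' : ∀ S : Set X, MeasurableSet S → ∀ η : H, Pφ S η = 0 → μφ η S = 0 := by
    intro S hS η h
    haveI := hμφfin η
    have h2 := hPφ η S hS
    rw [h, inner_zero_right] at h2
    have h3 : (μφ η S).toReal = 0 := by exact_mod_cast h2.symm
    exact ((ENNReal.toReal_eq_zero_iff _).mp h3).resolve_right (measure_ne_top _ _)
  have zπ' : ∀ S : Set X, MeasurableSet S → ∀ η : H, Pπ S η = 0 → μπ η S = 0 := by
    intro S hS η h
    haveI := hμπfin η
    have h2 := hPπ η S hS
    rw [h, inner_zero_right] at h2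
    have h3 : (μπ η S).toReal = 0 := by exact_mod_cast h2.symm
    exact ((ENNReal.toReal_eq_zero_iff _).mp h3).resolve_right (measure_ne_top _ _)
  -- Step 1: local separation of a point from the complement of an open set
  have step1 : ∀ W : Set X, IsOpen W → ∀ x ∈ W, ∃ U : Set X, IsOpen U ∧ x ∈ U ∧ U ⊆ W ∧
      (∀ η : H, Pπ U (Pφ Wᶜ η) = 0) ∧ (∀ η : H, Pφ Wᶜ (Pπ U η) = 0) := by
    intro W hW x hxW
    have hxy : ∀ y : X, y ∈ Wᶜ → x ≠ y := fun y hy hxy => hy (hxy ▸ hxW)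
    choose U' V' hU'o hV'o hxU' hyV' hdisj hz using fun y : ↥(Wᶜ) => hsep x y (hxy y y.2)
    have hcov : Wᶜ ⊆ ⋃ y : ↥(Wᶜ), V' y := fun y hy => Set.mem_iUnion.mpr ⟨⟨y, hy⟩, hyV' ⟨y, hy⟩⟩
    obtain ⟨t, ht⟩ := (hW.isClosed_compl.isCompact).elim_finite_subcover V' hV'o hcov
    set U : Set X := ⋂ i ∈ t, U' i with hUdef
    have hUo : IsOpen U := isOpen_biInter_finset fun i _ => hU'o i
    have hUm : MeasurableSet U := hUo.measurableSet
    have hWc : MeasurableSet (Wᶜ) := hW.isClosed_compl.measurableSet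
    have hxU : x ∈ U := Set.mem_biInter fun i _ => hxU' i
    have hUW : U ⊆ W := by
      intro z hz'
      by_contra hzW
      obtain ⟨i, hi, hzV⟩ := Set.mem_iUnion₂.mp (ht hzW)
      have hzU : z ∈ U' i := Set.mem_iInter₂.mp hz' i hi
      exact (hdisj i).ne_of_mem hzU hzV rfl
    have hkey : ∀ i ∈ t, ∀ η : H, Pφ (V' i) (Pπ U η) = 0 := by
      intro i hi η
      have h1 : ∀ ξ : H, Pπ (U' i) (Pφ (V' i) (Pπ (U' i) ξ)) = 0 := by
        intro ξ
        have := congrFun (congrArg DFunLike.coe (hz i)) ξ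
        simpa using this
      have h2 : ∀ ξ : H, Pφ (V' i) (Pπ (U' i) ξ) = 0 := by
        intro ξ
        refine UcpAux.zero_of_diag (qφ (V' i) (hV'o i).measurableSet) (q0 μφ (V' i)) ?_
        have hd : (inner ℂ (Pπ (U' i) ξ) (Pφ (V' i) (Pπ (U' i) ξ)) : ℂ) = 0 := by
          rw [← ContinuousLinearMap.adjoint_inner_right, saπ (U' i) (hU'o i).measurableSet,
            h1 ξ, inner_zero_right]
        have h6 := qφ (V' i) (hV'o i).measurableSet (Pπ (U' i) ξ)
        rw [hd] at h6
        exact_mod_cast h6.symm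
      have h3 : ∀ ξ : H, Pπ (U' i) (Pφ (V' i) ξ) = 0 :=
        UcpAux.flip_comp (saπ (U' i) (hU'o i).measurableSet) (saφ (V' i) (hV'o i).measurableSet) h2
      have h4 : ∀ ξ : H, Pπ U (Pφ (V' i) ξ) = 0 := by
        intro ξ
        refine zπ U hUm _ ?_
        have h5 : μπ (Pφ (V' i) ξ) (U' i) = 0 := zπ' (U' i) (hU'o i).measurableSet _ (h3 ξ)
        exact le_antisymm (h5 ▸ measure_mono (Set.biInter_subset_of_mem hi)) zero_le
      exact UcpAux.flip_comp (saφ (V' i) (hV'o i).measurableSet) (saπ U hUm) h4 η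
    have hB : ∀ η : H, Pφ (Wᶜ) (Pπ U η) = 0 := by
      intro η
      refine zφ (Wᶜ) hWc _ ?_
      have hsub : μφ (Pπ U η) (Wᶜ) ≤ ∑ i ∈ t, μφ (Pπ U η) (V' i) :=
        le_trans (measure_mono ht) (measure_biUnion_finset_le t _)
      have hzero : ∀ i ∈ t, μφ (Pπ U η) (V' i) = 0 := fun i hi =>
        zφ' (V' i) (hV'o i).measurableSet _ (hkey i hi η)
      rw [Finset.sum_eq_zero hzero] at hsub
      exact le_antisymm hsub zero_le
    have hA : ∀ η : H, Pπ U (Pφ (Wᶜ) η) = 0 :=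
      UcpAux.flip_comp (saπ U hUm) (saφ (Wᶜ) hWc) hB
    exact ⟨U, hUo, hxU, hUW, hA, hB⟩
  -- second countability
  letI : MetricSpace X := TopologicalSpace.metrizableSpaceMetric X
  -- Step 2: μπ ξ W ≤ μφ ξ W for open W
  have step2 : ∀ (ξ : H) (W : Set X), IsOpen W → μπ ξ W ≤ μφ ξ W := by
    intro ξ W hW
    haveI := hμπfin ξ
    haveI := hμφfin ξ
    rcases Set.eq_empty_or_nonempty W with hWe | hWne
    · simp [hWe]
    choose Ux hUo hxU hUW hA hB using fun x : W => step1 W hW x x.2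
    have hUnion : (⋃ x : W, Ux x) = W := by
      apply Set.Subset.antisymm
      · exact Set.iUnion_subset fun x => hUW x
      · intro z hz
        exact Set.mem_iUnion.mpr ⟨⟨z, hz⟩, hxU ⟨z, hz⟩⟩
    obtain ⟨T, hTc, hTU⟩ := TopologicalSpace.isOpen_iUnion_countable Ux hUo
    have hTne : T.Nonempty := by
      obtain ⟨z, hz⟩ := hWne
      have hmem : z ∈ ⋃ x : ↥W, Ux x := by rw [hUnion]; exact hz
      rw [← hTU] at hmem
      obtain ⟨i, hi, _⟩ := Set.mem_iUnion₂.mp hmem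
      exact ⟨i, hi⟩
    obtain ⟨g, hg⟩ := Set.Countable.exists_eq_range hTc hTne
    set G : ℕ → Set X := fun n => ⋃ k ∈ Finset.range (n + 1), Ux (g k) with hGdef
    have hGm : ∀ n, MeasurableSet (G n) :=
      fun n => (isOpen_biUnion fun k _ => hUo (g k)).measurableSet
    have hWcm : MeasurableSet (Wᶜ) := hW.isClosed_compl.measurableSet
    have hGU : (⋃ n, G n) = W := by
      rw [← hUnion, ← hTU]
      apply Set.Subset.antisymm
      · refine Set.iUnion_subset fun n => ?_
        refine Set.iUnion₂_subset fun k _ => ?_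
        have : (g k : ↥W) ∈ T := by rw [hg]; exact Set.mem_range_self k
        exact Set.subset_biUnion_of_mem this
      · refine Set.iUnion₂_subset fun i hi => ?_
        rw [hg] at hi
        obtain ⟨k, rfl⟩ := hi
        intro z hz
        refine Set.mem_iUnion.mpr ⟨k, ?_⟩
        exact Set.mem_biUnion (Finset.self_mem_range_succ k) hz
    -- for each n : Pπ (G n) ∘ Pφ Wᶜ = 0
    have hkeyn : ∀ n (ζ : H), Pπ (G n) (Pφ (Wᶜ) ζ) = 0 := by
      intro n ζ
      refine zπ (G n) (hGm n) _ ?_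
      have hsub : μπ (Pφ (Wᶜ) ζ) (G n) ≤ ∑ k ∈ Finset.range (n + 1), μπ (Pφ (Wᶜ) ζ) (Ux (g k)) :=
        measure_biUnion_finset_le _ _
      have hzero : ∀ k ∈ Finset.range (n + 1), μπ (Pφ (Wᶜ) ζ) (Ux (g k)) = 0 := fun k _ =>
        zπ' (Ux (g k)) (hUo (g k)).measurableSet _ (hA (g k) ζ)
      rw [Finset.sum_eq_zero hzero] at hsub
      exact le_antisymm hsub zero_le
    -- orthogonality bound
    have hGn : ∀ n, μπ ξ (G n) ≤ μφ ξ W := by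
      intro n
      have horth := UcpAux.orth_sum (qπ (G n) (hGm n)) (q0 μπ (G n)) (bπ (G n))
        (qφ (Wᶜ) hWcm) (q0 μφ (Wᶜ)) (bφ (Wᶜ)) (hkeyn n) ξ
      -- (μπ ξ (G n)).toReal + (μφ ξ Wᶜ).toReal ≤ ‖ξ‖^2
      have htot : (μφ ξ W).toReal + (μφ ξ (Wᶜ)).toReal = ‖ξ‖ ^ 2 := by
        rw [← ENNReal.toReal_add (measure_ne_top _ _) (measure_ne_top _ _),
          measure_add_measure_compl hW.measurableSet, hmφ ξ]
      have hle : (μπ ξ (G n)).toReal ≤ (μφ ξ W).toReal := by linarith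
      exact (ENNReal.toReal_le_toReal (measure_ne_top _ _) (measure_ne_top _ _)).mp hle
    have hdir : Directed (· ⊆ ·) G := by
      have hmono : Monotone G := by
        intro a b hab
        refine Set.iUnion₂_subset fun k hk => ?_
        have hk' : k ∈ Finset.range (b + 1) :=
          Finset.mem_range.mpr (lt_of_lt_of_le (Finset.mem_range.mp hk) (by omega))
        intro z hz
        exact Set.mem_biUnion hk' hz
      exact hmono.directed_le
    calc μπ ξ W = μπ ξ (⋃ n, G n) := by rw [hGU]
      _ = ⨆ n, μπ ξ (G n) := hdir.measure_iUnion
      _ ≤ μφ ξ W := iSup_le hGn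
  -- Step 3 : equality on open sets
  have step3 : ∀ (ξ : H) (W : Set X), IsOpen W → μπ ξ W = μφ ξ W := by
    intro ξ W hW
    haveI := hμπfin ξ
    haveI := hμφfin ξ
    refine le_antisymm (step2 ξ W hW) ?_
    by_contra hlt
    push_neg at hlt
    obtain ⟨F, hFW, hFc, hFgt⟩ :=
      MeasureTheory.Measure.WeaklyRegular.innerRegular (μ := μφ ξ) hW (μπ ξ W) hlt
    -- closed sets : μφ ξ F ≤ μπ ξ F
    have hFm : MeasurableSet F := hFc.measurableSet
    have hcompl : μπ ξ (Fᶜ) ≤ μφ ξ (Fᶜ) := step2 ξ (Fᶜ) hFc.isOpen_compl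
    have hF : μφ ξ F ≤ μπ ξ F := by
      have h1 : (μπ ξ F).toReal + (μπ ξ (Fᶜ)).toReal = ‖ξ‖ ^ 2 := by
        rw [← ENNReal.toReal_add (measure_ne_top _ _) (measure_ne_top _ _),
          measure_add_measure_compl hFm, hmπ ξ]
      have h2 : (μφ ξ F).toReal + (μφ ξ (Fᶜ)).toReal = ‖ξ‖ ^ 2 := by
        rw [← ENNReal.toReal_add (measure_ne_top _ _) (measure_ne_top _ _),
          measure_add_measure_compl hFm, hmφ ξ]
      have h3 : (μπ ξ (Fᶜ)).toReal ≤ (μφ ξ (Fᶜ)).toReal :=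
        (ENNReal.toReal_le_toReal (measure_ne_top _ _) (measure_ne_top _ _)).mpr hcompl
      have h4 : (μφ ξ F).toReal ≤ (μπ ξ F).toReal := by linarith
      exact (ENNReal.toReal_le_toReal (measure_ne_top _ _) (measure_ne_top _ _)).mp h4
    have : μπ ξ W < μπ ξ W :=
      lt_of_lt_of_le hFgt (le_trans hF (le_trans (measure_mono hFW) le_rfl))
    exact lt_irrefl _ this
  -- measures agree
  have heq : ∀ ξ : H, μπ ξ = μφ ξ := by
    intro ξ
    haveI := hμπfin ξ
    refine MeasureTheory.ext_of_generate_finite {s : Set X | IsOpen s} ?_ isPiSystem_isOpen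
      (fun s hs => step3 ξ s hs) (step3 ξ Set.univ isOpen_univ)
    rw [BorelSpace.measurable_eq (α := X)]
    rfl
  -- conclusion
  intro f
  have hdiag : ∀ ξ : H, (inner ℂ ξ ((φ f - π f : H →L[ℂ] H) ξ) : ℂ) = 0 := by
    intro ξ
    rw [ContinuousLinearMap.sub_apply, inner_sub_right, hμφ ξ f, hμπ ξ f, heq ξ, sub_self]
  have hz : ((φ f - π f : H →L[ℂ] H) : H →ₗ[ℂ] H) = 0 := by
    rw [← inner_map_self_eq_zero]
    intro ξ
    simp only [ContinuousLinearMap.coe_coe]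
    rw [← inner_conj_symm ((φ f - π f : H →L[ℂ] H) ξ) ξ, hdiag ξ]
    simp
  have hz2 : (φ f - π f : H →L[ℂ] H) = 0 := by
    ext ξ
    have := congrFun (congrArg (fun (g : H →ₗ[ℂ] H) => g.toFun) hz) ξ
    simpa using this
  have := sub_eq_zero.mp hz2
  exact this
end
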